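/- Fix α ∈ (0,1] and d ≥ 1. For any dyadic cube R, the sum over dyadic cubes P with ℓ(P) ≥ ℓ(R) and d(P,R) > ℓ(P) of (√(ℓR·ℓP))^α / d(R,P)^{α+d} · |P| is bounded by a constant depending only on α and d. -/
import Mathlib


open MeasureTheory ENNReal Set

structure DyadicCube (d : ℕ) where
  j : ℤ
  m : Fin d → ℤ

namespace DyadicCube

variable {d : ℕ}

/-- side length `2^{-j}` of the dyadic cube. -/
noncomputable def side (Q : DyadicCube d) : ℝ := 2 ^ (-Q.j)

/-- the dyadic cube `2^{-j}([0,1)^d + m)` as a subset of `ℝ^d`. -/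
def toSet (Q : DyadicCube d) : Set (Fin d → ℝ) :=
  {x | ∀ i, (Q.m i : ℝ) * 2 ^ (-Q.j) ≤ x i ∧ x i < ((Q.m i : ℝ) + 1) * 2 ^ (-Q.j)}

/-- the concentric triple `3Q`. -/
def triple (Q : DyadicCube d) : Set (Fin d → ℝ) :=
  {x | ∀ i, ((Q.m i : ℝ) - 1) * 2 ^ (-Q.j) ≤ x i ∧ x i < ((Q.m i : ℝ) + 2) * 2 ^ (-Q.j)}

/-- the centre of the cube. -/
noncomputable def center (Q : DyadicCube d) : Fin d → ℝ :=
  fun i => ((Q.m i : ℝ) + 1 / 2) * 2 ^ (-Q.j)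

/-- the `k`-fold dyadic ancestor `Q^{(k)}`. -/
def ancestor (k : ℕ) (Q : DyadicCube d) : DyadicCube d :=
  ⟨Q.j - k, fun i => Int.fdiv (Q.m i) (2 ^ k)⟩

/-- the `k`-grandchildren `ch_k(Q)`. -/
def children (k : ℕ) (Q : DyadicCube d) : Set (DyadicCube d) :=
  {P | P.j = Q.j + k ∧ P.toSet ⊆ Q.toSet}

/-- distance between two sets in the `ℓ^∞` metric of `ℝ^d`. -/
noncomputable def sdist (A B : Set (Fin d → ℝ)) : ℝ :=
  (⨅ a ∈ A, EMetric.infEdist a B).toReal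

/-- average `⟨f⟩_A` of `f` over `A`. -/
noncomputable def avg (f : (Fin d → ℝ) → ℝ) (A : Set (Fin d → ℝ)) : ℝ :=
  (volume A).toReal⁻¹ * ∫ x in A, f x

/-- average `⟨|f|⟩_A`. -/
noncomputable def avgAbs (f : (Fin d → ℝ) → ℝ) (A : Set (Fin d → ℝ)) : ℝ :=
  avg (fun x => |f x|) A

/-- `Q` is `r`-good with parameter `γ`. -/
def IsGood (r : ℕ) (γ : ℝ) (Q : DyadicCube d) : Prop :=
  ∀ P : DyadicCube d, 2 ^ r * Q.side ≤ P.side →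
    Q.side ^ γ * P.side ^ (1 - γ) < sdist Q.toSet (frontier P.toSet)

/-- martingale (Haar) difference `Δ_Q f`. -/
noncomputable def mdiff (f : (Fin d → ℝ) → ℝ) (Q : DyadicCube d) (x : Fin d → ℝ) : ℝ :=
  ∑' J : {J : DyadicCube d // J ∈ children 1 Q},
    Set.indicator J.1.toSet (fun _ => avg f J.1.toSet - avg f Q.toSet) x

/-- `Σ_ε ⟨f, h_Q^ε⟩² = ‖Δ_Q f‖_{L²}²`, the total squared Haar coefficient on `Q`. -/
noncomputable def haarSq (f : (Fin d → ℝ) → ℝ) (P : DyadicCube d) : ℝ :=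
  ∫ x in P.toSet, (mdiff f P x) ^ 2

end DyadicCube

open DyadicCube

namespace FarAux

open DyadicCube Metric

variable {d : ℕ}

instance : Countable (DyadicCube d) := by
  have h : Function.Injective (fun Q : DyadicCube d => (Q.j, Q.m)) := by
    intro a b hab; cases a; cases b; simpa using hab
  exact h.countable

lemma side_pos (Q : DyadicCube d) : 0 < Q.side := by
  unfold DyadicCube.side; positivity

lemma toSet_eq (Q : DyadicCube d) :
    Q.toSet = Set.pi Set.univ
      (fun i => Set.Ico ((Q.m i : ℝ) * 2 ^ (-Q.j)) (((Q.m i : ℝ) + 1) * 2 ^ (-Q.j))) := by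
  ext x; simp [DyadicCube.toSet, Set.mem_pi]

lemma measurableSet_toSet (Q : DyadicCube d) : MeasurableSet Q.toSet := by
  rw [toSet_eq]; exact MeasurableSet.univ_pi fun i => measurableSet_Ico

lemma volume_toSet (Q : DyadicCube d) : volume Q.toSet = ENNReal.ofReal (Q.side ^ d) := by
  rw [toSet_eq, Real.volume_pi_Ico]
  have : ∀ i : Fin d, ENNReal.ofReal (((Q.m i : ℝ) + 1) * 2 ^ (-Q.j) - (Q.m i : ℝ) * 2 ^ (-Q.j))
      = ENNReal.ofReal Q.side := by
    intro i; congr 1; unfold DyadicCube.side; ring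
  rw [Finset.prod_congr rfl (fun i _ => this i), Finset.prod_const, Finset.card_univ,
    Fintype.card_fin, ← ENNReal.ofReal_pow (side_pos Q).le]

lemma corner_mem (Q : DyadicCube d) : (fun i => (Q.m i : ℝ) * 2 ^ (-Q.j)) ∈ Q.toSet := by
  intro i
  have h : (0:ℝ) < 2 ^ (-Q.j) := by positivity
  refine ⟨le_rfl, ?_⟩
  show (Q.m i : ℝ) * 2 ^ (-Q.j) < ((Q.m i : ℝ) + 1) * 2 ^ (-Q.j)
  nlinarith

lemma center_mem (Q : DyadicCube d) : Q.center ∈ Q.toSet := by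
  intro i
  have h : (0:ℝ) < 2 ^ (-Q.j) := by positivity
  unfold DyadicCube.center
  constructor <;> nlinarith

lemma dist_le_side {Q : DyadicCube d} {x y : Fin d → ℝ} (hx : x ∈ Q.toSet) (hy : y ∈ Q.toSet) :
    dist x y ≤ Q.side := by
  rw [dist_pi_le_iff (side_pos Q).le]
  intro i
  obtain ⟨h1, h2⟩ := hx i
  obtain ⟨h3, h4⟩ := hy i
  rw [Real.dist_eq, abs_le]
  have h : (0:ℝ) < 2 ^ (-Q.j) := by positivity
  have hside : Q.side = 2 ^ (-Q.j) := rfl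
  constructor <;> nlinarith

lemma disjoint_toSet {P P' : DyadicCube d} (hj : P.j = P'.j) (hne : P ≠ P') :
    Disjoint P.toSet P'.toSet := by
  have hm : P.m ≠ P'.m := by
    intro h; exact hne (by cases P; cases P'; simp_all)
  obtain ⟨i, hi⟩ := Function.ne_iff.mp hm
  rw [Set.disjoint_left]
  intro x hx hx'
  obtain ⟨h1, h2⟩ := hx i
  obtain ⟨h3, h4⟩ := hx' i
  rw [hj] at h1 h2
  have h : (0:ℝ) < 2 ^ (-P'.j) := by positivity
  rcases lt_or_gt_of_ne hi with hlt | hlt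
  · have : ((P.m i : ℝ) + 1) ≤ (P'.m i : ℝ) := by exact_mod_cast Int.add_one_le_iff.mpr hlt
    nlinarith
  · have : ((P'.m i : ℝ) + 1) ≤ (P.m i : ℝ) := by exact_mod_cast Int.add_one_le_iff.mpr hlt
    nlinarith

noncomputable def esdist (A B : Set (Fin d → ℝ)) : ℝ≥0∞ := ⨅ a ∈ A, EMetric.infEdist a B

lemma sdist_nonneg (A B : Set (Fin d → ℝ)) : 0 ≤ sdist A B := ENNReal.toReal_nonneg

lemma sdist_eq (A B : Set (Fin d → ℝ)) : sdist A B = (esdist A B).toReal := rfl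

lemma esdist_le {A B : Set (Fin d → ℝ)} {a b : Fin d → ℝ} (ha : a ∈ A) (hb : b ∈ B) :
    esdist A B ≤ edist a b :=
  (iInf₂_le a ha).trans (EMetric.infEdist_le_edist_of_mem hb)

lemma esdist_comm (A B : Set (Fin d → ℝ)) : esdist A B = esdist B A := by
  have h : ∀ A B : Set (Fin d → ℝ), esdist A B ≤ esdist B A := by
    intro A B
    refine le_iInf₂ fun b hb => ?_
    rw [EMetric.infEdist]
    refine le_iInf₂ fun a ha => ?_
    rw [edist_comm]
    exact esdist_le ha hb
  exact le_antisymm (h A B) (h B A)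

lemma sdist_comm (A B : Set (Fin d → ℝ)) : sdist A B = sdist B A := by
  rw [sdist_eq, sdist_eq, esdist_comm]

lemma esdist_ne_top (P R : DyadicCube d) : esdist P.toSet R.toSet ≠ ⊤ :=
  fun h => by simpa [h] using (esdist_le (corner_mem P) (corner_mem R)).trans_lt (edist_lt_top _ _)

/-- every point of `P` is within `sdist P R + ℓP + ℓR` of the center of `R`. -/
lemma toSet_subset_closedBall (P R : DyadicCube d) :
    P.toSet ⊆ Metric.closedBall R.center (sdist P.toSet R.toSet + P.side + R.side) := by
  intro x hx
  rw [Metric.mem_closedBall]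
  have hD : ENNReal.ofReal (sdist P.toSet R.toSet) = esdist P.toSet R.toSet := by
    rw [sdist_eq]; exact ENNReal.ofReal_toReal (esdist_ne_top P R)
  refine le_of_forall_pos_le_add fun ε hε => ?_
  have h1 : esdist P.toSet R.toSet < esdist P.toSet R.toSet + ENNReal.ofReal ε :=
    ENNReal.lt_add_right (esdist_ne_top P R) (by simpa using hε)
  rw [esdist] at h1
  obtain ⟨a, ha, ha2⟩ := by
    have := iInf_lt_iff.mp h1
    simpa [iInf_lt_iff] using this
  obtain ⟨b, hb, hb2⟩ := EMetric.infEdist_lt_iff.mp ha2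
  have hab : dist a b ≤ sdist P.toSet R.toSet + ε := by
    have h2 : ENNReal.ofReal (dist a b) ≤ esdist P.toSet R.toSet + ENNReal.ofReal ε := by
      rw [← edist_dist]; exact hb2.le
    rw [← hD, ← ENNReal.ofReal_add (sdist_nonneg _ _) hε.le] at h2
    exact (ENNReal.ofReal_le_ofReal_iff (by have := sdist_nonneg P.toSet R.toSet; linarith)).mp h2
  have t1 : dist x a ≤ P.side := dist_le_side hx ha
  have t2 : dist b R.center ≤ R.side := dist_le_side hb (center_mem R)
  calc dist x R.center ≤ dist x a + dist a b + dist b R.center := dist_triangle4 x a b R.center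
    _ ≤ sdist P.toSet R.toSet + P.side + R.side + ε := by linarith

/-- the key scalar computation. -/
lemma coef_calc {α lR : ℝ} (hα : 0 < α) (hR : 0 < lR) (d k m : ℕ) :
    Real.sqrt (lR * (2 ^ k * lR)) ^ α / (2 ^ m * (2 ^ k * lR)) ^ (α + (d : ℝ))
        * (2 ^ (m + 4) * (2 ^ k * lR)) ^ d
      = 2 ^ (4 * d) * ((2 : ℝ) ^ (-(α / 2))) ^ k * ((2 : ℝ) ^ (-α)) ^ m := by
  have hP : (0:ℝ) < 2 ^ k * lR := by positivity
  have hPR : (0:ℝ) < lR * (2 ^ k * lR) := by positivity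
  have hsq : (0:ℝ) < Real.sqrt (lR * (2 ^ k * lR)) := Real.sqrt_pos.mpr hPR
  have hm : (0:ℝ) < 2 ^ m * (2 ^ k * lR) := by positivity
  have hm4 : (0:ℝ) < 2 ^ (m + 4) * (2 ^ k * lR) := by positivity
  have hL : (0:ℝ) < Real.sqrt (lR * (2 ^ k * lR)) ^ α / (2 ^ m * (2 ^ k * lR)) ^ (α + (d : ℝ))
      * (2 ^ (m + 4) * (2 ^ k * lR)) ^ d := by positivity
  have hRp : (0:ℝ) < 2 ^ (4 * d) * ((2 : ℝ) ^ (-(α / 2))) ^ k * ((2 : ℝ) ^ (-α)) ^ m := by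
    positivity
  apply Real.log_injOn_pos (Set.mem_Ioi.mpr hL) (Set.mem_Ioi.mpr hRp)
  rw [Real.log_mul (by positivity) (by positivity),
    Real.log_div (by positivity) (by positivity),
    Real.log_rpow hsq, Real.log_sqrt hPR.le,
    Real.log_mul hR.ne' hP.ne', Real.log_mul (by positivity) hR.ne',
    Real.log_rpow hm]
  rw [Real.log_mul (by positivity) hP.ne', Real.log_mul (by positivity) hR.ne']
  rw [Real.log_pow (n := d)]
  rw [Real.log_mul (by positivity) hP.ne', Real.log_mul (by positivity) hR.ne']
  rw [Real.log_mul (by positivity) (by positivity), Real.log_mul (by positivity) (by positivity)]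
  simp only [Real.log_pow, Real.log_rpow two_pos]
  push_cast
  ring

end FarAux

open FarAux Metric

/-- 'Far' summability: for `α ∈ (0,1]`, `d ≥ 1`, there is `C = C(α,d)` so that for any dyadic `R`,
`Σ_{P : ℓP ≥ ℓR, d(P,R) > ℓP} (√(ℓR ℓP))^α / d(R,P)^{α+d} · |P| ≤ C`. -/
theorem far_sum_bounded {d : ℕ} (hd : 1 ≤ d) {α : ℝ} (hα : α ∈ Set.Ioc (0 : ℝ) 1) :
    ∃ C > 0, ∀ R : DyadicCube d,
      (∑' P : {P : DyadicCube d // R.side ≤ P.side ∧ P.side < sdist P.toSet R.toSet},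
        ENNReal.ofReal
          (Real.sqrt (R.side * P.1.side) ^ α / sdist R.toSet P.1.toSet ^ (α + (d : ℝ)) *
            P.1.side ^ d)) ≤ ENNReal.ofReal C := by
  obtain ⟨hα0, hα1⟩ := hα
  set a : ℝ≥0∞ := ENNReal.ofReal ((2:ℝ) ^ (-(α/2))) with ha_def
  set b : ℝ≥0∞ := ENNReal.ofReal ((2:ℝ) ^ (-α)) with hb_def
  set c : ℝ≥0∞ := ENNReal.ofReal ((2:ℝ) ^ (4*d)) with hc_def
  have ha1 : a < 1 := by
    rw [ha_def, ← ENNReal.ofReal_one]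
    exact ENNReal.ofReal_lt_ofReal_iff_of_nonneg (by positivity) |>.mpr
      (Real.rpow_lt_one_of_one_lt_of_neg one_lt_two (by linarith))
  have hb1 : b < 1 := by
    rw [hb_def, ← ENNReal.ofReal_one]
    exact ENNReal.ofReal_lt_ofReal_iff_of_nonneg (by positivity) |>.mpr
      (Real.rpow_lt_one_of_one_lt_of_neg one_lt_two (by linarith))
  have hane : 1 - a ≠ 0 := by simp [tsub_eq_zero_iff_le, ha1.not_ge]
  have hbne : 1 - b ≠ 0 := by simp [tsub_eq_zero_iff_le, hb1.not_ge]
  set B : ℝ≥0∞ := c * (1 - a)⁻¹ * (1 - b)⁻¹ with hB_def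
  have hBne : B ≠ ⊤ := by
    refine ENNReal.mul_ne_top (ENNReal.mul_ne_top ENNReal.ofReal_ne_top ?_) ?_
    · exact ENNReal.inv_ne_top.mpr hane
    · exact ENNReal.inv_ne_top.mpr hbne
  have hBpos : 0 < B := by
    rw [hB_def]
    refine ENNReal.mul_pos (ENNReal.mul_pos ?_ ?_).ne' ?_
    · exact (ENNReal.ofReal_pos.mpr (by positivity)).ne'
    · refine (ENNReal.inv_pos.mpr ?_).ne'
      exact (lt_of_le_of_lt tsub_le_self (lt_top_iff_ne_top.mpr ENNReal.one_ne_top)).ne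
    · refine (ENNReal.inv_pos.mpr ?_).ne'
      exact (lt_of_le_of_lt tsub_le_self (lt_top_iff_ne_top.mpr ENNReal.one_ne_top)).ne
  refine ⟨B.toReal, ENNReal.toReal_pos hBpos.ne' hBne, fun R => ?_⟩
  rw [ENNReal.ofReal_toReal hBne]
  have hlR : 0 < R.side := side_pos R
  set F : {P : DyadicCube d // R.side ≤ P.side ∧ P.side < sdist P.toSet R.toSet} → ℝ≥0∞ :=
    fun P => ENNReal.ofReal
      (Real.sqrt (R.side * P.1.side) ^ α / sdist R.toSet P.1.toSet ^ (α + (d : ℝ)) *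
        P.1.side ^ d) with hF_def
  set g : {P : DyadicCube d // R.side ≤ P.side ∧ P.side < sdist P.toSet R.toSet} → ℕ × ℕ :=
    fun P => ((R.j - P.1.j).toNat, (Int.log 2 (sdist P.1.toSet R.toSet / P.1.side)).toNat)
    with hg_def
  have hsplit : ∑' P, F P = ∑' q : ℕ × ℕ, ∑' P : {P // g P = q}, F P.1 := by
    rw [← (Equiv.sigmaFiberEquiv g).tsum_eq F]
    exact ENNReal.tsum_sigma'
      (fun p : Σ q : ℕ × ℕ, {P // g P = q} => F p.2.1)
  have key : ∀ q : ℕ × ℕ, ∑' P : {P // g P = q}, F P.1 ≤ c * a ^ q.1 * b ^ q.2 := by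
    rintro ⟨k, m⟩
    have hlP : (0:ℝ) < 2 ^ k * R.side := by positivity
    -- facts about cubes in the fiber
    have facts : ∀ P : {P // g P = (k, m)}, P.1.1.j = R.j - k ∧ P.1.1.side = 2 ^ k * R.side ∧
        P.1.1.toSet ⊆ Metric.closedBall R.center (2 ^ (m+3) * (2 ^ k * R.side)) ∧
        F P.1 ≤ ENNReal.ofReal
          (Real.sqrt (R.side * (2 ^ k * R.side)) ^ α
            / (2 ^ m * (2 ^ k * R.side)) ^ (α + (d : ℝ))) * volume P.1.1.toSet := by
      rintro ⟨⟨Q, hQ1, hQ2⟩, hgQ⟩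
      rw [hg_def, Prod.mk.injEq] at hgQ
      have hk : (R.j - Q.j).toNat = k := hgQ.1
      have hm : (Int.log 2 (sdist Q.toSet R.toSet / Q.side)).toNat = m := hgQ.2
      have hQs : 0 < Q.side := side_pos Q
      have hjle : Q.j ≤ R.j := by
        have := (zpow_right_strictMono₀ (one_lt_two (α := ℝ))).le_iff_le.mp hQ1
        omega
      have hk' : R.j - Q.j = (k : ℤ) := by omega
      have hside : Q.side = 2 ^ k * R.side := by
        show (2:ℝ) ^ (-Q.j) = 2 ^ k * 2 ^ (-R.j)
        rw [show -Q.j = (k : ℤ) + -R.j by omega, zpow_add₀ (two_ne_zero), zpow_natCast]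
      set D := sdist Q.toSet R.toSet with hD_def
      have hD : Q.side < D := hQ2
      have hDpos : 0 < D := hQs.trans hD
      have h1le : (1:ℝ) ≤ D / Q.side := by
        rw [le_div_iff₀ hQs]; linarith
      have hlog : Int.log 2 (D / Q.side) = (m : ℤ) := by
        have h0 : 0 ≤ Int.log 2 (D / Q.side) := by
          rw [Int.log_of_one_le_right _ h1le]; exact Int.natCast_nonneg _
        omega
      have h2m : 2 ^ m * Q.side ≤ D := by
        have h := Int.zpow_log_le_self (b := 2) one_lt_two
          (show (0:ℝ) < D / Q.side by positivity)
        rw [hlog, zpow_natCast] at h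
        exact (le_div_iff₀ hQs).mp h
      have h2m' : D < 2 ^ (m+1) * Q.side := by
        have h := Int.lt_zpow_succ_log_self (b := 2) one_lt_two (D / Q.side)
        rw [hlog, show ((m:ℤ) + 1) = ((m+1 : ℕ) : ℤ) by push_cast; ring, zpow_natCast] at h
        exact (div_lt_iff₀ hQs).mp h
      refine ⟨show Q.j = R.j - (k:ℤ) by omega, hside, ?_, ?_⟩
      · refine (toSet_subset_closedBall Q R).trans (Metric.closedBall_subset_closedBall ?_)
        rw [← hD_def, hside]
        have hpow : (2:ℝ) ^ (m+1) + 2 ≤ 2 ^ (m+3) := by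
          have h1 : (1:ℝ) ≤ 2 ^ m := one_le_pow₀ one_le_two
          rw [pow_succ, pow_succ, pow_succ, pow_succ]
          nlinarith
        have hRP : R.side ≤ 2 ^ k * R.side := by rw [← hside]; exact hQ1
        rw [hside] at h2m'
        nlinarith
      · rw [hF_def]
        simp only
        rw [sdist_comm R.toSet Q.toSet, ← hD_def, hside, volume_toSet, hside,
          ← ENNReal.ofReal_mul (by positivity)]
        apply ENNReal.ofReal_le_ofReal
        rw [← hside]
        have hrnum : (0:ℝ) ≤ Real.sqrt (R.side * Q.side) ^ α := by positivity
        have hrp : (2 ^ m * Q.side) ^ (α + (d:ℝ)) ≤ D ^ (α + (d:ℝ)) :=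
          Real.rpow_le_rpow (by positivity) h2m (by positivity)
        have hden : (0:ℝ) < (2 ^ m * Q.side) ^ (α + (d:ℝ)) := by positivity
        gcongr
    -- sum the bound over the fiber
    have hdisj : Pairwise (Function.onFun Disjoint
        (fun P : {P // g P = (k, m)} => P.1.1.toSet)) := by
      intro p q hpq
      refine disjoint_toSet ?_ ?_
      · rw [(facts p).1, (facts q).1]
      · intro h
        exact hpq (Subtype.ext (Subtype.ext h))
    calc ∑' P : {P // g P = (k, m)}, F P.1
        ≤ ∑' P : {P // g P = (k, m)}, ENNReal.ofReal
            (Real.sqrt (R.side * (2 ^ k * R.side)) ^ α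
              / (2 ^ m * (2 ^ k * R.side)) ^ (α + (d : ℝ))) * volume P.1.1.toSet :=
          ENNReal.tsum_le_tsum fun P => (facts P).2.2.2
      _ = ENNReal.ofReal
            (Real.sqrt (R.side * (2 ^ k * R.side)) ^ α
              / (2 ^ m * (2 ^ k * R.side)) ^ (α + (d : ℝ)))
            * ∑' P : {P // g P = (k, m)}, volume P.1.1.toSet := ENNReal.tsum_mul_left
      _ = ENNReal.ofReal
            (Real.sqrt (R.side * (2 ^ k * R.side)) ^ α
              / (2 ^ m * (2 ^ k * R.side)) ^ (α + (d : ℝ)))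
            * volume (⋃ P : {P // g P = (k, m)}, P.1.1.toSet) := by
          rw [measure_iUnion hdisj fun P => measurableSet_toSet _]
      _ ≤ ENNReal.ofReal
            (Real.sqrt (R.side * (2 ^ k * R.side)) ^ α
              / (2 ^ m * (2 ^ k * R.side)) ^ (α + (d : ℝ)))
            * volume (Metric.closedBall R.center (2 ^ (m+3) * (2 ^ k * R.side))) := by
          gcongr
          exact Set.iUnion_subset fun P => (facts P).2.2.1
      _ = ENNReal.ofReal
            (Real.sqrt (R.side * (2 ^ k * R.side)) ^ α
              / (2 ^ m * (2 ^ k * R.side)) ^ (α + (d : ℝ))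
            * (2 ^ (m+4) * (2 ^ k * R.side)) ^ d) := by
          rw [Real.volume_pi_closedBall _ (by positivity), Fintype.card_fin,
            ← ENNReal.ofReal_mul (by positivity)]
          congr 2
          ring
      _ = c * a ^ k * b ^ m := by
          rw [coef_calc hα0 hlR, ENNReal.ofReal_mul (by positivity),
            ENNReal.ofReal_mul (by positivity),
            ENNReal.ofReal_pow (p := (2:ℝ) ^ (-(α/2))) (by positivity),
            ENNReal.ofReal_pow (p := (2:ℝ) ^ (-α)) (by positivity)]
  calc ∑' P, F P = ∑' q : ℕ × ℕ, ∑' P : {P // g P = q}, F P.1 := hsplit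
    _ ≤ ∑' q : ℕ × ℕ, c * a ^ q.1 * b ^ q.2 := ENNReal.tsum_le_tsum key
    _ = B := by
        rw [ENNReal.tsum_prod']
        have h1 : ∀ k : ℕ, ∑' m : ℕ, c * a ^ k * b ^ m = (c * (1 - b)⁻¹) * a ^ k := by
          intro k
          rw [ENNReal.tsum_mul_left, ENNReal.tsum_geometric]
          ring
        rw [tsum_congr h1, ENNReal.tsum_mul_left, ENNReal.tsum_geometric, hB_def]
        ring
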